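/- arXiv:1809.02798 — 5 statements merged into one kernel-verified Lean document; each statement's English description precedes it below -/
import Mathlib

section
/- Let k ≥ 2, and let μ and ν be linear functionals on the Sekine algebra A_k with coefficient families (α, κ) and (β, ω) respectively, i.e. μ = Σ_{i,j∈ℤ_k} α_{i,j} d̃_{i,j} + Σ_{r,s∈ℤ_k} κ_{r,s} ẽ_{r,s} and ν = Σ_{i,j} β_{i,j} d̃_{i,j} + Σ_{r,s} ω_{r,s} ẽ_{r,s}. Then the convolution μ⋆ν := (μ⊗ν)∘Δ_k has coefficient family (γ, θ) given by γ_{i,j} = Σ_{m,n∈ℤ_k} α_{m,n} β_{i−m,j−n} + (1/k) Σ_{r,s∈ℤ_k} η^{i(r−s)} κ_{r,s} ω_{r+j,s+j} for all i,j ∈ ℤ_k, and θ_{r,s} = Σ_{i,j∈ℤ_k} η^{i(s−r)} (α_{i,j} ω_{r+j,s+j} + β_{i,j} κ_{r−j,s−j}) for all r,s ∈ ℤ_k. -/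
/-!
Statement 0: convolution of linear functionals on the Sekine algebra `A_k`.

The Sekine algebra is realized concretely as pairs `(f, X)` with
`f : ℤ_k × ℤ_k → ℂ` and `X ∈ M_k(ℂ)`.  `dEl i j` and `eEl r s` are the basis
elements `d_{i,j}` and `e_{r,s}`, `funcOf α κ` is the linear functional with
coefficient family `(α, κ)`, and the comultiplication `Δ` is hypothesized via
its defining formulas on the basis.  The conclusion states that the
convolution `(μ ⊗ ν) ∘ Δ` has coefficient family `(γ, θ)` with the asserted
formulas, i.e. its values on the basis elements are `γ_{i,j}` and `θ_{r,s}`.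
-/

open Finset
open scoped TensorProduct

noncomputable section

/-- `η^t` for `t ∈ ℤ_k`, where `η = exp(2πi/k)`. -/
def etac (k : ℕ) [NeZero k] (t : ZMod k) : ℂ :=
  Complex.exp (2 * (Real.pi : ℂ) * Complex.I * (t.val : ℂ) / (k : ℂ))

/-- The Sekine algebra `A_k = ⊕_{i,j} ℂ d_{i,j} ⊕ M_k(ℂ)`. -/
abbrev Sek (k : ℕ) := (ZMod k × ZMod k → ℂ) × Matrix (ZMod k) (ZMod k) ℂ

/-- The basis element `d_{i,j}` of the commutative part. -/
def dEl (k : ℕ) (i j : ZMod k) : Sek k := (fun x => if x = (i, j) then 1 else 0, 0)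

/-- The matrix unit `e_{r,s}` of the matrix part. -/
def eEl (k : ℕ) [NeZero k] (r s : ZMod k) : Sek k := (0, Matrix.single r s 1)

/-- The linear functional `Σ α_{i,j} d̃_{i,j} + Σ κ_{r,s} ẽ_{r,s}` with coefficient
family `(α, κ)`. -/
def funcOf (k : ℕ) [NeZero k] (α κ : ZMod k → ZMod k → ℂ) : Sek k →ₗ[ℂ] ℂ where
  toFun a := (∑ i : ZMod k, ∑ j : ZMod k, α i j * a.1 (i, j))
    + ∑ r : ZMod k, ∑ s : ZMod k, κ r s * a.2 r s
  map_add' a b := by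
    simp only [Prod.fst_add, Prod.snd_add, Pi.add_apply, Matrix.add_apply, mul_add,
      Finset.sum_add_distrib]
    ring
  map_smul' c a := by
    simp only [Prod.smul_fst, Prod.smul_snd, Pi.smul_apply, Matrix.smul_apply, smul_eq_mul,
      RingHom.id_apply, mul_add, Finset.mul_sum]
    congr 1 <;>
      exact Finset.sum_congr rfl fun _ _ => Finset.sum_congr rfl fun _ _ => by ring

lemma funcOf_dEl (k : ℕ) [NeZero k] (α κ : ZMod k → ZMod k → ℂ) (i j : ZMod k) :
    funcOf k α κ (dEl k i j) = α i j := by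
  simp [funcOf, dEl, ite_and]

lemma funcOf_eEl (k : ℕ) [NeZero k] (α κ : ZMod k → ZMod k → ℂ) (r s : ZMod k) :
    funcOf k α κ (eEl k r s) = κ r s := by
  simp [funcOf, eEl, Matrix.single, ite_and]

lemma TensorProduct.lid_comp_map_tmul {R M N : Type*} [CommSemiring R] [AddCommMonoid M]
    [AddCommMonoid N] [Module R M] [Module R N] (f : M →ₗ[R] R) (g : N →ₗ[R] R) (m : M) (n : N) :
    ((TensorProduct.lid R R).toLinearMap ∘ₗ TensorProduct.map f g) (m ⊗ₜ n) = f m * g n := by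
  simp

lemma Fintype.sum_sum_neg {G M : Type*} [AddGroup G] [Fintype G] [AddCommMonoid M]
    (f : G → G → M) : ∑ m : G, ∑ n : G, f (-m) (-n) = ∑ m : G, ∑ n : G, f m n := by
  rw [← Equiv.sum_comp (Equiv.neg G) (fun m => ∑ n, f m n)]
  exact Fintype.sum_congr _ _ fun m => Equiv.sum_comp (Equiv.neg G) (f (-m))

theorem stmt0_general (k : ℕ) [NeZero k]
    (Δ : Sek k →ₗ[ℂ] Sek k ⊗[ℂ] Sek k)
    (hd : ∀ i j : ZMod k, Δ (dEl k i j) =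
      (∑ m : ZMod k, ∑ n : ZMod k, dEl k m n ⊗ₜ[ℂ] dEl k (i - m) (j - n))
        + (1 / (k : ℂ)) • ∑ m : ZMod k, ∑ n : ZMod k,
            etac k (i * (m - n)) • (eEl k m n ⊗ₜ[ℂ] eEl k (m + j) (n + j)))
    (he : ∀ i j : ZMod k, Δ (eEl k i j) =
      (∑ m : ZMod k, ∑ n : ZMod k,
          etac k (m * (i - j)) • (dEl k (-m) (-n) ⊗ₜ[ℂ] eEl k (i - n) (j - n)))
        + ∑ m : ZMod k, ∑ n : ZMod k,
            etac k (m * (j - i)) • (eEl k (i - n) (j - n) ⊗ₜ[ℂ] dEl k m n))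
    (α κ β ω : ZMod k → ZMod k → ℂ) :
    (∀ i j : ZMod k,
      ((TensorProduct.lid ℂ ℂ).toLinearMap ∘ₗ
          TensorProduct.map (funcOf k α κ) (funcOf k β ω) ∘ₗ Δ) (dEl k i j) =
        (∑ m : ZMod k, ∑ n : ZMod k, α m n * β (i - m) (j - n))
          + (1 / (k : ℂ)) * ∑ r : ZMod k, ∑ s : ZMod k,
              etac k (i * (r - s)) * (κ r s * ω (r + j) (s + j))) ∧
    (∀ r s : ZMod k,
      ((TensorProduct.lid ℂ ℂ).toLinearMap ∘ₗ
          TensorProduct.map (funcOf k α κ) (funcOf k β ω) ∘ₗ Δ) (eEl k r s) =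
        ∑ i : ZMod k, ∑ j : ZMod k,
          etac k (i * (s - r)) *
            (α i j * ω (r + j) (s + j) + β i j * κ (r - j) (s - j))) := by
  refine ⟨fun i j => ?_, fun r s => ?_⟩
  · rw [← LinearMap.comp_assoc, LinearMap.comp_apply, hd]
    simp only [map_add, map_smul, map_sum, TensorProduct.lid_comp_map_tmul, funcOf_dEl,
      funcOf_eEl, smul_eq_mul]
  · rw [← LinearMap.comp_assoc, LinearMap.comp_apply, he]
    simp only [map_add, map_smul, map_sum, TensorProduct.lid_comp_map_tmul, funcOf_dEl,
      funcOf_eEl, smul_eq_mul, mul_add, Finset.sum_add_distrib]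
    congr 1
    · rw [← Fintype.sum_sum_neg]
      simp only [neg_neg, sub_neg_eq_add, neg_mul_comm, neg_sub]
    · simp only [mul_comm (κ _ _)]

theorem stmt0 (k : ℕ) [NeZero k] (hk : 2 ≤ k)
    (Δ : Sek k →ₗ[ℂ] Sek k ⊗[ℂ] Sek k)
    (hd : ∀ i j : ZMod k, Δ (dEl k i j) =
      (∑ m : ZMod k, ∑ n : ZMod k, dEl k m n ⊗ₜ[ℂ] dEl k (i - m) (j - n))
        + (1 / (k : ℂ)) • ∑ m : ZMod k, ∑ n : ZMod k,
            etac k (i * (m - n)) • (eEl k m n ⊗ₜ[ℂ] eEl k (m + j) (n + j)))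
    (he : ∀ i j : ZMod k, Δ (eEl k i j) =
      (∑ m : ZMod k, ∑ n : ZMod k,
          etac k (m * (i - j)) • (dEl k (-m) (-n) ⊗ₜ[ℂ] eEl k (i - n) (j - n)))
        + ∑ m : ZMod k, ∑ n : ZMod k,
            etac k (m * (j - i)) • (eEl k (i - n) (j - n) ⊗ₜ[ℂ] dEl k m n))
    (α κ β ω : ZMod k → ZMod k → ℂ) :
    (∀ i j : ZMod k,
      ((TensorProduct.lid ℂ ℂ).toLinearMap ∘ₗ
          TensorProduct.map (funcOf k α κ) (funcOf k β ω) ∘ₗ Δ) (dEl k i j) =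
        (∑ m : ZMod k, ∑ n : ZMod k, α m n * β (i - m) (j - n))
          + (1 / (k : ℂ)) * ∑ r : ZMod k, ∑ s : ZMod k,
              etac k (i * (r - s)) * (κ r s * ω (r + j) (s + j))) ∧
    (∀ r s : ZMod k,
      ((TensorProduct.lid ℂ ℂ).toLinearMap ∘ₗ
          TensorProduct.map (funcOf k α κ) (funcOf k β ω) ∘ₗ Δ) (eEl k r s) =
        ∑ i : ZMod k, ∑ j : ZMod k,
          etac k (i * (s - r)) *
            (α i j * ω (r + j) (s + j) + β i j * κ (r - j) (s - j))) :=
  stmt0_general k Δ hd he α κ β ω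
end
end

section
/- Let k ≥ 2 and let (α, κ) be an idempotent state system on the Sekine quantum group A_k. Then exactly one of the following two alternatives holds: either Σ_{i,j∈ℤ_k} α_{i,j} = 1 and Σ_{r∈ℤ_k} κ_{r,r} = 0, or Σ_{i,j∈ℤ_k} α_{i,j} = Σ_{r∈ℤ_k} κ_{r,r} = 1/2. -/
/-! Sum equation (A) over all `i, j`. The convolution term totals `(Σα)²`, and by orthogonality
of the characters of `ℤ_k` the κ-term keeps only `r = s` and totals `k (Tr K)²`. Hence `a = Σα`
and `t = Tr K` satisfy `a = a² + t²` and, by (C), `a + t = 1`, so `(a - 1)(2a - 1) = 0`. -/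

open Finset
open scoped ComplexOrder

noncomputable section

/-- An *idempotent state system* on the Sekine quantum group `A_k`: the
coefficients `α_{i,j}` are nonnegative reals (expressed via the order on `ℂ`),
the matrix `K = [κ_{r,s}]` is positive semidefinite, and the equations (A),
(B), (C) hold. -/
def IdemSystem (k : ℕ) [NeZero k] (α κ : ZMod k → ZMod k → ℂ) : Prop :=
  (∀ i j : ZMod k, 0 ≤ α i j) ∧
  (Matrix.of κ).PosSemidef ∧
  (∀ i j : ZMod k, α i j =
      (∑ r : ZMod k, ∑ s : ZMod k, α (i - r) (j - s) * α r s)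
        + (1 / (k : ℂ)) * ∑ r : ZMod k, ∑ s : ZMod k,
            etac k (i * (r - s)) * (κ r s * κ (r + j) (s + j))) ∧
  (∀ r s : ZMod k, κ r s =
      ∑ i : ZMod k, ∑ j : ZMod k,
        etac k (i * (s - r)) * α i j * (κ (r + j) (s + j) + κ (r - j) (s - j))) ∧
  ((∑ i : ZMod k, ∑ j : ZMod k, α i j) + ∑ r : ZMod k, κ r r = 1)

lemma sum_sum_sub_mul {G R : Type*} [AddCommGroup G] [Fintype G] [NonUnitalNonAssocSemiring R]
    (f g : G → R) : ∑ x, ∑ y, f (x - y) * g y = (∑ x, f x) * ∑ y, g y := by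
  rw [sum_comm, mul_sum]
  refine sum_congr rfl fun y _ => ?_
  rw [← sum_mul, Fintype.sum_equiv (Equiv.subRight y) (fun x => f (x - y)) f fun _ => rfl]

lemma eq_one_and_eq_zero_xor_eq_half {K : Type*} [Field K] [NeZero (2 : K)] {a t : K}
    (h : a = a ^ 2 + t ^ 2) (hsum : a + t = 1) :
    Xor (a = 1 ∧ t = 0) (a = 1 / 2 ∧ t = 1 / 2) := by
  have half : 2 * (1 / 2 : K) = 1 := mul_one_div_cancel (NeZero.ne 2)
  have hfac : (a - 1) * (2 * a - 1) = 0 := by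
    linear_combination -h + (a - 1 - t) * hsum
  rcases mul_eq_zero.mp hfac with ha | ha
  · refine Or.inl ⟨⟨by linear_combination ha, by linear_combination hsum - ha⟩, ?_⟩
    rintro ⟨ha', -⟩
    exact one_ne_zero (α := K) (by linear_combination -2 * ha + 2 * ha' + half)
  · have ha' : a = 1 / 2 := by linear_combination (1 / 2 : K) * ha - a * half
    refine Or.inr ⟨⟨ha', by linear_combination hsum - ha' - half⟩, ?_⟩
    rintro ⟨ha1, -⟩
    exact one_ne_zero (α := K) (by linear_combination 2 * ha' - 2 * ha1 + half)

section ZModSums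

variable {k : ℕ} [NeZero k]

lemma etac_eq_stdAddChar (t : ZMod k) : etac k t = ZMod.stdAddChar t := by
  rw [ZMod.stdAddChar_apply, ZMod.toCircle_apply, etac]

lemma sum_etac_mul (c : ZMod k) :
    ∑ i : ZMod k, etac k (i * c) = if c = 0 then (k : ℂ) else 0 := by
  simp only [etac_eq_stdAddChar, AddChar.sum_mulShift c (ZMod.isPrimitive_stdAddChar k),
    ZMod.card, Nat.cast_ite, Nat.cast_zero]

lemma sum_etac_mul_sub_mul (Y : ZMod k → ZMod k → ℂ) :
    ∑ i : ZMod k, ∑ r : ZMod k, ∑ s : ZMod k, etac k (i * (r - s)) * Y r s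
      = k * ∑ r : ZMod k, Y r r := by
  calc _ = ∑ r : ZMod k, ∑ s : ZMod k, (∑ i : ZMod k, etac k (i * (r - s))) * Y r s := by
        rw [sum_comm]
        refine sum_congr rfl fun r _ => ?_
        rw [sum_comm]
        simp_rw [sum_mul]
    _ = k * ∑ r : ZMod k, Y r r := by
        simp [sum_etac_mul, sub_eq_zero, mul_sum]

lemma sum_sum_sub_mul_self_eq_sq (α : ZMod k → ZMod k → ℂ) :
    ∑ i : ZMod k, ∑ j : ZMod k, ∑ r : ZMod k, ∑ s : ZMod k, α (i - r) (j - s) * α r s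
      = (∑ i : ZMod k, ∑ j : ZMod k, α i j) ^ 2 := by
  have h := sum_sum_sub_mul (fun p : ZMod k × ZMod k => α p.1 p.2) fun p => α p.1 p.2
  simp only [Fintype.sum_prod_type, Prod.fst_sub, Prod.snd_sub] at h
  rw [sq, h]

lemma sum_etac_twisted_eq_trace_sq (κ : ZMod k → ZMod k → ℂ) :
    ∑ i : ZMod k, ∑ j : ZMod k, ∑ r : ZMod k, ∑ s : ZMod k,
        etac k (i * (r - s)) * (κ r s * κ (r + j) (s + j))
      = k * (∑ r : ZMod k, κ r r) ^ 2 := by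
  rw [sum_comm]
  simp_rw [sum_etac_mul_sub_mul]
  rw [← mul_sum, sum_comm, sq, sum_mul]
  congr 1
  refine sum_congr rfl fun r _ => ?_
  rw [← mul_sum, Fintype.sum_equiv (Equiv.addLeft r) (fun j => κ (r + j) (r + j))
    (fun j => κ j j) fun _ => rfl]

lemma IdemSystem.mass_eq_mass_sq_add_trace_sq {α κ : ZMod k → ZMod k → ℂ}
    (h : IdemSystem k α κ) :
    ∑ i : ZMod k, ∑ j : ZMod k, α i j
      = (∑ i : ZMod k, ∑ j : ZMod k, α i j) ^ 2 + (∑ r : ZMod k, κ r r) ^ 2 := by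
  obtain ⟨-, -, hA, -, -⟩ := h
  conv_lhs => rw [sum_congr rfl fun i _ => sum_congr rfl fun j _ => hA i j]
  simp only [sum_add_distrib, ← mul_sum, sum_sum_sub_mul_self_eq_sq,
    sum_etac_twisted_eq_trace_sq]
  rw [one_div, inv_mul_cancel_left₀ (Nat.cast_ne_zero.mpr (NeZero.ne k))]

end ZModSums

theorem stmt2_general (k : ℕ) [NeZero k] (α κ : ZMod k → ZMod k → ℂ)
    (h : IdemSystem k α κ) :
    Xor'
      ((∑ i : ZMod k, ∑ j : ZMod k, α i j) = 1 ∧ (∑ r : ZMod k, κ r r) = 0)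
      ((∑ i : ZMod k, ∑ j : ZMod k, α i j) = 1 / 2 ∧ (∑ r : ZMod k, κ r r) = 1 / 2) :=
  eq_one_and_eq_zero_xor_eq_half h.mass_eq_mass_sq_add_trace_sq h.2.2.2.2

theorem stmt2 (k : ℕ) [NeZero k] (hk : 2 ≤ k) (α κ : ZMod k → ZMod k → ℂ)
    (h : IdemSystem k α κ) :
    Xor'
      ((∑ i : ZMod k, ∑ j : ZMod k, α i j) = 1 ∧ (∑ r : ZMod k, κ r r) = 0)
      ((∑ i : ZMod k, ∑ j : ZMod k, α i j) = 1 / 2 ∧ (∑ r : ZMod k, κ r r) = 1 / 2) :=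
  stmt2_general k α κ h
end
end

section
/- Let k ≥ 2 and let α : ℤ_k×ℤ_k → ℂ and κ : ℤ_k×ℤ_k → ℂ. Then (α, κ) is an idempotent state system on A_k satisfying Σ_{i,j∈ℤ_k} α_{i,j} = 1 and Σ_{r∈ℤ_k} κ_{r,r} = 0 if and only if: (1) κ_{r,s} = 0 for all r,s ∈ ℤ_k; and (2) the set Γ := {(i,j) ∈ ℤ_k×ℤ_k : α_{i,j} ≠ 0} is a subgroup of ℤ_k×ℤ_k and α_{i,j} = 1/#Γ for all (i,j) ∈ Γ (and α_{i,j} = 0 otherwise). -/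
/-!
A positive semidefinite matrix with zero trace vanishes, so `κ ≡ 0` and equation (A) says that
`α` is a probability density on `ℤ_k × ℤ_k` equal to its own convolution square. At a point `x`
where `α` is maximal, `α x = ∑ y, α (x - y) α y` is an average of values `≤ α x`, so
`α (x - y) = α x` whenever `α y ≠ 0`. Hence the support of `α` is closed under subtraction and
`α` is constant on it: `α` is the uniform density of a subgroup. Conversely, uniform densities of
subgroups are idempotent.
-/

open Finset
open scoped ComplexOrder

noncomputable section

namespace AddSubgroup

variable {G : Type*} [AddGroup G] (R : Type*) [DivisionRing R]

def uniformDensity (Γ : AddSubgroup G) (x : G) : R :=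
  open Classical in if x ∈ Γ then (Nat.card Γ : R)⁻¹ else 0

variable {R} (Γ : AddSubgroup G)

lemma uniformDensity_of_mem {x : G} (hx : x ∈ Γ) : Γ.uniformDensity R x = (Nat.card Γ : R)⁻¹ := by
  simp [uniformDensity, hx]

lemma uniformDensity_of_notMem {x : G} (hx : x ∉ Γ) : Γ.uniformDensity R x = 0 := by
  simp [uniformDensity, hx]

lemma map_uniformDensity {S : Type*} [DivisionRing S] (f : R →+* S) (x : G) :
    f (Γ.uniformDensity R x) = Γ.uniformDensity S x := by
  by_cases hx : x ∈ Γ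
  · simp [uniformDensity_of_mem, hx]
  · simp [uniformDensity_of_notMem, hx]

lemma uniformDensity_sub_of_mem {x y : G} (hy : y ∈ Γ) :
    Γ.uniformDensity R (x - y) = Γ.uniformDensity R x := by
  by_cases hx : x ∈ Γ
  · rw [uniformDensity_of_mem Γ hx, uniformDensity_of_mem Γ (Γ.sub_mem hx hy)]
  · have hxy : x - y ∉ Γ := fun h => hx (by simpa using Γ.add_mem h hy)
    rw [uniformDensity_of_notMem Γ hx, uniformDensity_of_notMem Γ hxy]

lemma uniformDensity_nonneg [LinearOrder R] [IsStrictOrderedRing R] (x : G) :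
    0 ≤ Γ.uniformDensity R x := by
  by_cases hx : x ∈ Γ
  · rw [uniformDensity_of_mem Γ hx]
    exact inv_nonneg.mpr (Nat.cast_nonneg _)
  · rw [uniformDensity_of_notMem Γ hx]

variable [Fintype G]

lemma uniformDensity_ne_zero_iff [CharZero R] {x : G} : Γ.uniformDensity R x ≠ 0 ↔ x ∈ Γ := by
  by_cases hx : x ∈ Γ
  · simp [uniformDensity_of_mem, hx, Nat.card_pos.ne']
  · simp [uniformDensity_of_notMem, hx]

lemma sum_uniformDensity [CharZero R] : ∑ x, Γ.uniformDensity R x = 1 := by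
  classical
  simp only [uniformDensity, Finset.sum_ite, sum_const_zero, add_zero, sum_const, nsmul_eq_mul]
  rw [← Fintype.card_subtype, ← Nat.card_eq_fintype_card]
  exact mul_inv_cancel₀ (Nat.cast_ne_zero.mpr Nat.card_pos.ne')

lemma uniformDensity_conv_self [CharZero R] (x : G) :
    ∑ y, Γ.uniformDensity R (x - y) * Γ.uniformDensity R y = Γ.uniformDensity R x := by
  have h : ∀ y, Γ.uniformDensity R (x - y) * Γ.uniformDensity R y
      = Γ.uniformDensity R x * Γ.uniformDensity R y := by
    intro y
    by_cases hy : y ∈ Γ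
    · rw [uniformDensity_sub_of_mem Γ hy]
    · simp [uniformDensity_of_notMem Γ hy]
  simp only [h, ← mul_sum, sum_uniformDensity, mul_one]

end AddSubgroup

section IdempotentDensity

variable {G : Type*} [AddGroup G] [Fintype G]

open AddSubgroup

lemma exists_eq_uniformDensity_iff {R : Type*} [DivisionRing R] [CharZero R] (f : G → R) :
    (∃ Γ : AddSubgroup G, (Γ : Set G) = {x | f x ≠ 0} ∧ ∀ x ∈ Γ, f x = 1 / Nat.card Γ) ↔
      ∃ Γ : AddSubgroup G, f = Γ.uniformDensity R := by
  constructor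
  · rintro ⟨Γ, hsupp, hval⟩
    refine ⟨Γ, funext fun x => ?_⟩
    by_cases hx : x ∈ Γ
    · rw [hval x hx, uniformDensity_of_mem Γ hx, one_div]
    · rw [uniformDensity_of_notMem Γ hx]
      by_contra hfx
      exact hx (show x ∈ (Γ : Set G) from hsupp ▸ hfx)
  · rintro ⟨Γ, rfl⟩
    refine ⟨Γ, Set.ext fun x => (uniformDensity_ne_zero_iff Γ).symm, fun x hx => ?_⟩
    rw [uniformDensity_of_mem Γ hx, one_div]

lemma apply_sub_eq_of_conv_self {R : Type*} [Ring R] [PartialOrder R] [IsOrderedRing R]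
    [NoZeroDivisors R] {a : G → R} (ha : ∀ x, 0 ≤ a x) (hsum : ∑ x, a x = 1)
    (hidem : ∀ x, a x = ∑ y, a (x - y) * a y) {x y : G} (hmax : ∀ z, a z ≤ a x)
    (hy : a y ≠ 0) : a (x - y) = a x := by
  have hzero : ∑ z, (a x - a (x - z)) * a z = 0 := by
    simp only [sub_mul, sum_sub_distrib, ← mul_sum, hsum, mul_one, ← hidem, sub_self]
  have hterm := (sum_eq_zero_iff_of_nonneg fun z _ =>
    mul_nonneg (sub_nonneg.mpr (hmax _)) (ha z)).mp hzero y (mem_univ y)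
  rcases mul_eq_zero.mp hterm with h | h
  · exact (sub_eq_zero.mp h).symm
  · exact absurd h hy

theorem exists_eq_uniformDensity_of_conv_self {R : Type*} [Field R] [LinearOrder R]
    [IsStrictOrderedRing R] {a : G → R} (ha : ∀ x, 0 ≤ a x) (hsum : ∑ x, a x = 1)
    (hidem : ∀ x, a x = ∑ y, a (x - y) * a y) : ∃ Γ : AddSubgroup G, a = Γ.uniformDensity R := by
  obtain ⟨x₀, hx₀⟩ := Finite.exists_max a
  set m := a x₀
  have hm : m ≠ 0 := by
    intro h
    have : ∀ x, a x = 0 := fun x => le_antisymm (h ▸ hx₀ x) (ha x)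
    simp [this] at hsum
  have key {x y : G} := apply_sub_eq_of_conv_self ha hsum hidem (x := x) (y := y)
  have h0 : a 0 = m := by simpa using key hx₀ hm
  have hmax0 : ∀ z, a z ≤ a 0 := h0 ▸ hx₀
  have hsupp : ∀ y, a y ≠ 0 → a y = m := by
    intro y hy
    have hneg : a (-y) = m := by simpa [h0] using key hmax0 hy
    simpa [h0] using key hmax0 (hneg ▸ hm : a (-y) ≠ 0)
  let Γ := AddSubgroup.ofSub {x | a x ≠ 0} ⟨x₀, hm⟩ fun x hx y hy => by
    show a (x + -y) ≠ 0
    rw [← sub_eq_add_neg, key (hsupp x hx ▸ hx₀) hy, hsupp x hx]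
    exact hm
  have hscale : ∀ x, a x = m * Nat.card Γ * Γ.uniformDensity R x := by
    intro x
    by_cases hx : x ∈ Γ
    · rw [uniformDensity_of_mem Γ hx, hsupp x hx, mul_assoc,
        mul_inv_cancel₀ (Nat.cast_ne_zero.mpr Nat.card_pos.ne'), mul_one]
    · rw [uniformDensity_of_notMem Γ hx, mul_zero]
      exact not_not.mp hx
  have hmc : m * Nat.card Γ = 1 := by
    simpa only [hscale, ← mul_sum, sum_uniformDensity, mul_one] using hsum
  exact ⟨Γ, funext fun x => by rw [hscale, hmc, one_mul]⟩

end IdempotentDensity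

section IdemSystem

variable {k : ℕ} [NeZero k]

lemma IdemSystem.eq_zero_of_trace_eq_zero {α κ : ZMod k → ZMod k → ℂ} (h : IdemSystem k α κ)
    (htr : ∑ r, κ r r = 0) : κ = 0 :=
  Matrix.of.injective (h.2.1.trace_eq_zero_iff.mp htr)

lemma IdemSystem.exists_eq_uniformDensity {α : ZMod k → ZMod k → ℂ} (h : IdemSystem k α 0)
    (hsum : ∑ i, ∑ j, α i j = 1) :
    ∃ Γ : AddSubgroup (ZMod k × ZMod k), (fun x => α x.1 x.2) = Γ.uniformDensity ℂ := by
  obtain ⟨hα, -, hA, -, -⟩ := h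
  obtain ⟨a, ha, rfl⟩ : ∃ a : ZMod k × ZMod k → ℝ, (∀ x, 0 ≤ a x) ∧
      α = fun i j => (a (i, j) : ℂ) :=
    ⟨fun x => (α x.1 x.2).re, fun x => (Complex.nonneg_iff.mp (hα x.1 x.2)).1,
      funext₂ fun i j => Complex.eq_re_of_ofReal_le (hα i j)⟩
  beta_reduce at hsum hA
  have hsum' : ∑ x, a x = 1 := by
    rw [Fintype.sum_prod_type]
    exact_mod_cast hsum
  have hidem : ∀ x, a x = ∑ y, a (x - y) * a y := by
    rintro ⟨i, j⟩
    have := hA i j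
    simp only [Pi.zero_apply, mul_zero, sum_const_zero, add_zero] at this
    rw [Fintype.sum_prod_type]
    exact_mod_cast this
  obtain ⟨Γ, rfl⟩ := exists_eq_uniformDensity_of_conv_self ha hsum' hidem
  exact ⟨Γ, funext (Γ.map_uniformDensity Complex.ofRealHom)⟩

lemma sum_sum_uniformDensity (Γ : AddSubgroup (ZMod k × ZMod k)) :
    ∑ i, ∑ j, Γ.uniformDensity ℂ (i, j) = 1 := by
  rw [← Fintype.sum_prod_type', Γ.sum_uniformDensity]

lemma idemSystem_uniformDensity (Γ : AddSubgroup (ZMod k × ZMod k)) :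
    IdemSystem k (fun i j => Γ.uniformDensity ℂ (i, j)) 0 := by
  refine ⟨fun i j => ?_, by simpa using Matrix.PosSemidef.zero, fun i j => ?_, fun r s => by simp,
    by simp [sum_sum_uniformDensity]⟩
  · show 0 ≤ Γ.uniformDensity ℂ (i, j)
    rw [← Γ.map_uniformDensity Complex.ofRealHom]
    exact Complex.zero_le_real.mpr (Γ.uniformDensity_nonneg _)
  · simp only [Pi.zero_apply, mul_zero, sum_const_zero, add_zero]
    rw [← Fintype.sum_prod_type', ← Γ.uniformDensity_conv_self]
    rfl

end IdemSystem

theorem stmt3_general (k : ℕ) [NeZero k] (α κ : ZMod k → ZMod k → ℂ) :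
    (IdemSystem k α κ ∧
        (∑ i : ZMod k, ∑ j : ZMod k, α i j) = 1 ∧ (∑ r : ZMod k, κ r r) = 0)
    ↔
    ((∀ r s : ZMod k, κ r s = 0) ∧
      ∃ Γ : AddSubgroup (ZMod k × ZMod k),
        (Γ : Set (ZMod k × ZMod k)) = {x : ZMod k × ZMod k | α x.1 x.2 ≠ 0} ∧
        ∀ i j : ZMod k, (i, j) ∈ Γ → α i j = 1 / (Nat.card Γ : ℂ)) := by
  have hsubgroup := exists_eq_uniformDensity_iff fun x : ZMod k × ZMod k => α x.1 x.2
  simp only [Prod.forall] at hsubgroup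
  constructor
  · rintro ⟨h, hsum, htr⟩
    obtain rfl := h.eq_zero_of_trace_eq_zero htr
    exact ⟨fun _ _ => rfl, hsubgroup.mpr (h.exists_eq_uniformDensity hsum)⟩
  · rintro ⟨hκ, hα⟩
    obtain ⟨Γ, hΓ⟩ := hsubgroup.mp hα
    obtain rfl : κ = 0 := funext₂ hκ
    obtain rfl : α = fun i j => Γ.uniformDensity ℂ (i, j) := funext₂ fun i j => congrFun hΓ (i, j)
    exact ⟨idemSystem_uniformDensity Γ, sum_sum_uniformDensity Γ, by simp⟩

theorem stmt3 (k : ℕ) [NeZero k] (hk : 2 ≤ k) (α κ : ZMod k → ZMod k → ℂ) :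
    (IdemSystem k α κ ∧
        (∑ i : ZMod k, ∑ j : ZMod k, α i j) = 1 ∧ (∑ r : ZMod k, κ r r) = 0)
    ↔
    ((∀ r s : ZMod k, κ r s = 0) ∧
      ∃ Γ : AddSubgroup (ZMod k × ZMod k),
        (Γ : Set (ZMod k × ZMod k)) = {x : ZMod k × ZMod k | α x.1 x.2 ≠ 0} ∧
        ∀ i j : ZMod k, (i, j) ∈ Γ → α i j = 1 / (Nat.card Γ : ℂ)) :=
  stmt3_general k α κ
end
end

section
/- Let k ≥ 2 and let (α, κ) be an idempotent state system on A_k satisfying Σ_{i,j∈ℤ_k} α_{i,j} = Σ_{r∈ℤ_k} κ_{r,r} = 1/2. Let Γ := {(i,j) ∈ ℤ_k×ℤ_k : α_{i,j} ≠ 0}, and define p := min{ i ∈ {1,…,k} : (i mod k, j) ∈ Γ for some j ∈ ℤ_k } and q := min{ j ∈ {1,…,k} : (i, j mod k) ∈ Γ for some i ∈ ℤ_k } (these sets are nonempty since (0,0) ∈ Γ). Then p divides k, q divides k, and for all (i,j) ∈ ℤ_k×ℤ_k, α_{i,j} ≠ 0 implies i ∈ pℤ_k and j ∈ qℤ_k.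 -/
/-! Statement 7 (Claim 1): for an idempotent state system with
`Σα = Tr K = 1/2`, the minima `p`, `q` of the first resp. second coordinates
appearing in the support of `α` divide `k`, and `α_{i,j} ≠ 0` implies `p | i`
and `q | j` in `ℤ_k`. -/

open Finset
open scoped ComplexOrder

noncomputable section

/-- `j ∈ qℤ_k`, i.e. `j` is a multiple of `q` in `ℤ_k`. -/
abbrev InQ (k q : ℕ) (j : ZMod k) : Prop := ∃ t : ZMod k, j = (q : ZMod k) * t

/-! Since `K ⪰ 0`, the `κ`-term of (A) is nonnegative (Schur product theorem), so
`α ∗ α ≤ α` pointwise. Hence the support of `α` is closed under addition, and being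
nonempty in a finite group it is a subgroup of `ℤ_k × ℤ_k`. Its two coordinate projections
are subgroups of `ℤ_k`, generated by their least positive representatives `p` and `q`. -/

open Matrix

theorem Matrix.PosSemidef.sum_apply_nonneg {n R : Type*} [Fintype n] [CommRing R]
    [PartialOrder R] [StarRing R] {M : Matrix n n R} (hM : M.PosSemidef) :
    0 ≤ ∑ r, ∑ s, M r s := by
  simpa [dotProduct, mulVec, Finset.sum_comm (γ := n)] using hM.dotProduct_mulVec_nonneg 1

section Phase

variable {k : ℕ} [NeZero k]

theorem etac_eq_toCircle (t : ZMod k) : etac k t = ZMod.toCircle t := by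
  rw [etac, ZMod.toCircle_apply]

theorem etac_mul_sub (i r s : ZMod k) :
    etac k (i * (r - s)) = etac k (i * r) * starRingEnd ℂ (etac k (i * s)) := by
  rw [etac_eq_toCircle, etac_eq_toCircle, etac_eq_toCircle, mul_sub, AddChar.map_sub_eq_div,
    div_eq_mul_inv, Circle.coe_mul, Circle.coe_inv_eq_conj]

end Phase

/-- The `κ`-term of equation (A) is `1ᵀ (E ⊙ K ⊙ Kⱼ) 1` with
`E r s = η^{i r} conj (η^{i s})` and `Kⱼ` the shift of `K` by `j`; it is nonnegative by the
Schur product theorem. -/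
theorem sum_etac_mul_shift_nonneg {k : ℕ} [NeZero k] {κ : ZMod k → ZMod k → ℂ}
    (hκ : (Matrix.of κ).PosSemidef) (i j : ZMod k) :
    0 ≤ ∑ r : ZMod k, ∑ s : ZMod k, etac k (i * (r - s)) * (κ r s * κ (r + j) (s + j)) := by
  have hM := ((posSemidef_vecMulVec_self_star fun r => etac k (i * r)).hadamard hκ).hadamard
    (hκ.submatrix (· + j))
  convert hM.sum_apply_nonneg using 3 with r _ s _
  simp [etac_mul_sub, vecMulVec_apply, mul_assoc]

theorem succ_nsmul_mem_of_add_mem {M : Type*} [AddMonoid M] {S : Set M}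
    (hadd : ∀ a ∈ S, ∀ b ∈ S, a + b ∈ S) {a : M} (ha : a ∈ S) (n : ℕ) :
    (n + 1) • a ∈ S := by
  induction n with
  | zero => simpa using ha
  | succ n ih => simpa [succ_nsmul] using hadd _ ih _ ha

section FiniteGroup

variable {G : Type*} [AddGroup G] [Finite G]

/-- In a finite group, `0` and `-a` are positive multiples of `a`. -/
def AddSubgroup.ofAddMem (S : Set G) (hne : S.Nonempty)
    (hadd : ∀ a ∈ S, ∀ b ∈ S, a + b ∈ S) : AddSubgroup G :=
  have zero_mem : (0 : G) ∈ S := by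
    obtain ⟨a, ha⟩ := hne
    rw [← addOrderOf_nsmul_eq_zero a, ← Nat.sub_add_cancel (addOrderOf_pos a)]
    exact succ_nsmul_mem_of_add_mem hadd ha _
  { carrier := S
    zero_mem' := zero_mem
    add_mem' := fun ha hb => hadd _ ha _ hb
    neg_mem' := fun {a} ha => by
      obtain ⟨n, hn⟩ := mem_multiples_iff_mem_zmultiples.mpr
        (AddSubgroup.neg_mem _ (AddSubgroup.mem_zmultiples a))
      rw [← hn]
      rcases n with _ | n
      · simpa using zero_mem
      · exact succ_nsmul_mem_of_add_mem hadd ha n }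

end FiniteGroup

theorem add_mem_support_of_conv_le {G R : Type*} [AddGroup G] [Fintype G] [CommSemiring R]
    [PartialOrder R] [IsStrictOrderedRing R] {f : G → R} (hf₀ : ∀ x, 0 ≤ f x)
    (hf : ∀ x, ∑ y, f (x - y) * f y ≤ f x) {a b : G} (ha : a ∈ Function.support f)
    (hb : b ∈ Function.support f) : a + b ∈ Function.support f := by
  have hab : f a * f b ≤ f (a + b) := calc
    f a * f b = f (a + b - b) * f b := by rw [add_sub_cancel_right]
    _ ≤ ∑ y, f (a + b - y) * f y :=
      Finset.single_le_sum (fun y _ => mul_nonneg (hf₀ _) (hf₀ y)) (Finset.mem_univ b)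
    _ ≤ f (a + b) := hf (a + b)
  exact (mul_pos ((hf₀ a).lt_of_ne' ha) ((hf₀ b).lt_of_ne' hb)).trans_le hab |>.ne'

theorem ZMod.natCast_mod_mem {k : ℕ} (H : AddSubgroup (ZMod k)) {p n : ℕ}
    (hp : (p : ZMod k) ∈ H) (hn : (n : ZMod k) ∈ H) : ((n % p : ℕ) : ZMod k) ∈ H := by
  have hmod : ((n % p : ℕ) : ZMod k) = n - (n / p) • (p : ZMod k) := by
    rw [eq_sub_iff_add_eq, nsmul_eq_mul, ← Nat.cast_mul, ← Nat.cast_add, mul_comm,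
      Nat.mod_add_div]
  rw [hmod]
  exact H.sub_mem hn (H.nsmul_mem hp _)

theorem ZMod.dvd_and_mem_of_eq_sInf {k : ℕ} [NeZero k] (H : AddSubgroup (ZMod k)) {p : ℕ}
    (hp : p = sInf {n : ℕ | 1 ≤ n ∧ n ≤ k ∧ (n : ZMod k) ∈ H}) :
    p ∣ k ∧ ∀ i ∈ H, ∃ t : ZMod k, i = p * t := by
  have hk : k ∈ {n : ℕ | 1 ≤ n ∧ n ≤ k ∧ (n : ZMod k) ∈ H} :=
    ⟨NeZero.one_le, le_rfl, by simp⟩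
  obtain ⟨hp₁, hpk, hpH⟩ : 1 ≤ p ∧ p ≤ k ∧ (p : ZMod k) ∈ H :=
    hp ▸ Nat.sInf_mem ⟨k, hk⟩
  have hmin : ∀ n : ℕ, 1 ≤ n → n ≤ k → (n : ZMod k) ∈ H → p ≤ n :=
    fun n h₁ h₂ hn => hp ▸ Nat.sInf_le ⟨h₁, h₂, hn⟩
  have mod_eq_zero : ∀ n : ℕ, (n : ZMod k) ∈ H → n % p = 0 := by
    intro n hn
    by_contra hne
    have hlt : n % p < p := Nat.mod_lt _ hp₁
    have := hmin (n % p) (Nat.one_le_iff_ne_zero.mpr hne) (by omega)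
      (ZMod.natCast_mod_mem H hpH hn)
    omega
  refine ⟨Nat.dvd_of_mod_eq_zero (mod_eq_zero k (by simp)), fun i hi => ?_⟩
  have hval : p ∣ i.val := Nat.dvd_of_mod_eq_zero (mod_eq_zero _ (by simpa))
  obtain ⟨t, ht⟩ := hval
  exact ⟨t, by rw [← ZMod.natCast_zmod_val i, ht, Nat.cast_mul]⟩

namespace IdemSystem

variable {k : ℕ} [NeZero k] {α κ : ZMod k → ZMod k → ℂ}

theorem conv_le (h : IdemSystem k α κ) (x : ZMod k × ZMod k) :
    ∑ y, Function.uncurry α (x - y) * Function.uncurry α y ≤ Function.uncurry α x := by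
  obtain ⟨-, hκ, hA, -, -⟩ := h
  have hk_inv : (0 : ℂ) ≤ 1 / (k : ℂ) := by
    rw [one_div, ← Complex.ofReal_natCast, ← Complex.ofReal_inv, Complex.zero_le_real]
    positivity
  obtain ⟨i, j⟩ := x
  simp only [Fintype.sum_prod_type, Prod.mk_sub_mk, Function.uncurry_apply_pair]
  rw [hA i j]
  exact le_add_of_nonneg_right (mul_nonneg hk_inv (sum_etac_mul_shift_nonneg hκ _ _))

def supportAddSubgroup (h : IdemSystem k α κ) (hα : ∑ i, ∑ j, α i j ≠ 0) :
    AddSubgroup (ZMod k × ZMod k) :=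
  AddSubgroup.ofAddMem (Function.support (Function.uncurry α))
    (by
      obtain ⟨i, j, hij⟩ : ∃ i j, α i j ≠ 0 := by
        by_contra! hzero
        exact hα (by simp [hzero])
      exact ⟨(i, j), hij⟩)
    (fun _ ha _ hb =>
      add_mem_support_of_conv_le (fun x : ZMod k × ZMod k => h.1 x.1 x.2) h.conv_le ha hb)

theorem mem_supportAddSubgroup (h : IdemSystem k α κ) (hα : ∑ i, ∑ j, α i j ≠ 0)
    {x : ZMod k × ZMod k} : x ∈ h.supportAddSubgroup hα ↔ α x.1 x.2 ≠ 0 :=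
  Iff.rfl

end IdemSystem

theorem stmt7_general (k : ℕ) [NeZero k] (α κ : ZMod k → ZMod k → ℂ)
    (h : IdemSystem k α κ)
    (hα : (∑ i : ZMod k, ∑ j : ZMod k, α i j) = 1 / 2)
    (p q : ℕ)
    (hp : p = sInf {i : ℕ | 1 ≤ i ∧ i ≤ k ∧ ∃ j : ZMod k, α (i : ZMod k) j ≠ 0})
    (hq : q = sInf {j : ℕ | 1 ≤ j ∧ j ≤ k ∧ ∃ i : ZMod k, α i (j : ZMod k) ≠ 0}) :
    p ∣ k ∧ q ∣ k ∧
      ∀ i j : ZMod k, α i j ≠ 0 → InQ k p i ∧ InQ k q j := by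
  set H := h.supportAddSubgroup (by rw [hα]; norm_num)
  have mem_fst (i : ZMod k) : i ∈ H.map (AddMonoidHom.fst _ _) ↔ ∃ j, α i j ≠ 0 := by
    simp [H, AddSubgroup.mem_map, IdemSystem.mem_supportAddSubgroup]
  have mem_snd (j : ZMod k) : j ∈ H.map (AddMonoidHom.snd _ _) ↔ ∃ i, α i j ≠ 0 := by
    simp [H, AddSubgroup.mem_map, IdemSystem.mem_supportAddSubgroup]
  obtain ⟨hpk, hpH⟩ := ZMod.dvd_and_mem_of_eq_sInf (H.map (AddMonoidHom.fst _ _))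
    (by simpa only [mem_fst] using hp)
  obtain ⟨hqk, hqH⟩ := ZMod.dvd_and_mem_of_eq_sInf (H.map (AddMonoidHom.snd _ _))
    (by simpa only [mem_snd] using hq)
  exact ⟨hpk, hqk, fun i j hij =>
    ⟨hpH i ((mem_fst i).2 ⟨j, hij⟩), hqH j ((mem_snd j).2 ⟨i, hij⟩)⟩⟩

theorem stmt7 (k : ℕ) [NeZero k] (hk : 2 ≤ k) (α κ : ZMod k → ZMod k → ℂ)
    (h : IdemSystem k α κ)
    (hα : (∑ i : ZMod k, ∑ j : ZMod k, α i j) = 1 / 2)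
    (hκ : (∑ r : ZMod k, κ r r) = 1 / 2)
    (p q : ℕ)
    (hp : p = sInf {i : ℕ | 1 ≤ i ∧ i ≤ k ∧ ∃ j : ZMod k, α (i : ZMod k) j ≠ 0})
    (hq : q = sInf {j : ℕ | 1 ≤ j ∧ j ≤ k ∧ ∃ i : ZMod k, α i (j : ZMod k) ≠ 0}) :
    p ∣ k ∧ q ∣ k ∧
      ∀ i j : ZMod k, α i j ≠ 0 → InQ k p i ∧ InQ k q j :=
  stmt7_general k α κ h hα p q hp hq
end
end

section
/- Let k ≥ 2 and let μ be a state on the Sekine algebra A_k, i.e. μ has coefficient family (α, κ) with all α_{i,j} nonnegative reals, K = [κ_{r,s}]_{r,s∈ℤ_k} positive semidefinite, and Σ_{i,j∈ℤ_k} α_{i,j} + Σ_{r∈ℤ_k} κ_{r,r} = 1. If α_{0,0} > 0, then the sequence of convolution powers (μ^{⋆n})_{n≥1} converges: there is a linear functional μ_∞ on A_k such that every coefficient of μ^{⋆n} converges to the corresponding coefficient of μ_∞ as n → ∞. -/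
open Finset
open scoped ComplexOrder

noncomputable section

/-- The `d`-coefficients of the convolution `μ ⋆ ν` of functionals with
coefficient families `(a, κ)` and `(b, ω)`. -/
def convA (k : ℕ) [NeZero k] (a κ b ω : ZMod k → ZMod k → ℂ) :
    ZMod k → ZMod k → ℂ := fun i j =>
  (∑ m : ZMod k, ∑ n : ZMod k, a m n * b (i - m) (j - n))
    + (1 / (k : ℂ)) * ∑ r : ZMod k, ∑ s : ZMod k,
        etac k (i * (r - s)) * (κ r s * ω (r + j) (s + j))

/-- The `e`-coefficients of the convolution `μ ⋆ ν` of functionals with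
coefficient families `(a, κ)` and `(b, ω)`. -/
def convK (k : ℕ) [NeZero k] (a κ b ω : ZMod k → ZMod k → ℂ) :
    ZMod k → ZMod k → ℂ := fun r s =>
  ∑ i : ZMod k, ∑ j : ZMod k,
    etac k (i * (s - r)) * (a i j * ω (r + j) (s + j) + b i j * κ (r - j) (s - j))

/-- `convIter k α κ n` is the coefficient family of the convolution power
`μ^{⋆(n+1)}` of the functional `μ` with coefficient family `(α, κ)`. -/
def convIter (k : ℕ) [NeZero k] (α κ : ZMod k → ZMod k → ℂ) :
    ℕ → (ZMod k → ZMod k → ℂ) × (ZMod k → ZMod k → ℂ)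
  | 0 => (α, κ)
  | n + 1 =>
      (convA k α κ (convIter k α κ n).1 (convIter k α κ n).2,
       convK k α κ (convIter k α κ n).1 (convIter k α κ n).2)

/-! The convolution is diagonalised by a Fourier transform: the two-dimensional transform
`fourierA` of the `d`-coefficients and the transform `fourierK` along the diagonals `s - r = t`
of the `e`-coefficients. At each frequency `(x, y)` the transforms of `μ^{⋆(n+1)}` obey a linear
recursion in `ℂ²` with the fixed matrix `[[α̂(x,y), κ̂(x,-y)], [κ̂(x,y), α̂(x,-y)]]`. Positivity
and normalisation of the state (with `|κ_rs|² ≤ κ_rr κ_ss`) put both eigenvalues of this matrix in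
the closed disc of radius `1 - α₀₀` about `α₀₀`, which meets the unit circle only at `1`; and a
double eigenvalue `1` forces the matrix to be the identity. So every frequency component converges,
and Fourier inversion gives coefficientwise convergence. -/

open Filter ZMod

namespace Sekine

lemma exists_tendsto_pow {z : ℂ} (hz : ‖z‖ < 1 ∨ z = 1) :
    ∃ L, Tendsto (fun n => z ^ n) atTop (nhds L) := by
  rcases hz with hz | rfl
  · exact ⟨0, tendsto_pow_atTop_nhds_zero_of_norm_lt_one hz⟩
  · exact ⟨1, by simp⟩

lemma sub_mul_eq_pow_mul_of_recurrence {a b : ℂ} {u : ℕ → ℂ}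
    (hu : ∀ n, u (n + 2) = (a + b) * u (n + 1) - a * b * u n) (n : ℕ) :
    u (n + 1) - b * u n = a ^ n * (u 1 - b * u 0) := by
  induction n with
  | zero => simp
  | succ n ih => rw [pow_succ, mul_right_comm, ← ih, hu]; ring

lemma exists_tendsto_of_recurrence {a b : ℂ} {u : ℕ → ℂ}
    (hu : ∀ n, u (n + 2) = (a + b) * u (n + 1) - a * b * u n)
    (ha : ‖a‖ < 1 ∨ a = 1) (hb : ‖b‖ < 1 ∨ b = 1) (h1 : a = 1 → b = 1 → u 1 = u 0) :
    ∃ L, Tendsto u atTop (nhds L) := by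
  have hv := sub_mul_eq_pow_mul_of_recurrence hu
  by_cases hab : a = b
  · subst hab
    rcases ha with ha | rfl
    · refine ⟨0, (tendsto_add_atTop_iff_nat 1).mp ?_⟩
      have hpow := tendsto_pow_atTop_nhds_zero_of_norm_lt_one ha
      have hmul : Tendsto (fun n : ℕ => (n : ℂ) ^ 1 * a ^ n) atTop (nhds 0) :=
        (summable_pow_mul_geometric_of_norm_lt_one 1 ha).tendsto_atTop_zero
      have hform : ∀ n, u (n + 1) =
          a * (a ^ n * u 0) + ((n : ℂ) ^ 1 * a ^ n + a ^ n) * (u 1 - a * u 0) := by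
        intro n
        induction n with
        | zero => simp
        | succ n ih => push_cast; linear_combination hv (n + 1) + a * ih
      refine Tendsto.congr (fun n => (hform n).symm) ?_
      simpa using ((hpow.mul_const (u 0)).const_mul a).add ((hmul.add hpow).mul_const _)
    · have hconst : ∀ n, u n = u 0 := by
        intro n
        induction n with
        | zero => rfl
        | succ n ih => linear_combination hv n + ih + h1 rfl rfl
      exact ⟨u 0, tendsto_const_nhds.congr fun n => (hconst n).symm⟩
  · have hw := sub_mul_eq_pow_mul_of_recurrence (a := b) (b := a) (u := u)
      fun n => by rw [hu]; ring
    obtain ⟨La, hLa⟩ := exists_tendsto_pow ha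
    obtain ⟨Lb, hLb⟩ := exists_tendsto_pow hb
    have hform : ∀ n, u n = (a ^ n * (u 1 - b * u 0) - b ^ n * (u 1 - a * u 0)) / (a - b) := by
      intro n
      rw [eq_div_iff (sub_ne_zero.mpr hab), ← hv, ← hw]; ring
    exact ⟨_, (((hLa.mul_const _).sub (hLb.mul_const _)).div_const _).congr
      fun n => (hform n).symm⟩

lemma eq_one_of_norm_le_one_of_one_le_re {z : ℂ} (hz : ‖z‖ ≤ 1) (hre : 1 ≤ z.re) : z = 1 := by
  have hsq : z.re ^ 2 + z.im ^ 2 ≤ 1 := by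
    have : ‖z‖ ^ 2 ≤ 1 := by nlinarith [norm_nonneg z]
    rw [Complex.sq_norm, Complex.normSq_apply] at this; nlinarith
  apply Complex.ext <;> simp only [Complex.one_re, Complex.one_im] <;> nlinarith

lemma eq_one_of_add_eq_two {z w : ℂ} (hz : ‖z‖ ≤ 1) (hw : ‖w‖ ≤ 1) (h : z + w = 2) : z = 1 := by
  refine eq_one_of_norm_le_one_of_one_le_re hz ?_
  have hre : z.re + w.re = 2 := by simpa using congrArg Complex.re h
  linarith [Complex.re_le_norm w]

lemma norm_lt_one_or_eq_one_of_norm_sub_le {z : ℂ} {δ : ℝ} (hδ : 0 < δ) (hz : ‖z - δ‖ ≤ 1 - δ) :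
    ‖z‖ < 1 ∨ z = 1 := by
  have hle : ‖z‖ ≤ 1 := by
    have := norm_le_norm_sub_add z δ
    rw [Complex.norm_of_nonneg hδ.le] at this
    linarith
  refine hle.lt_or_eq.imp_right fun h => eq_one_of_norm_le_one_of_one_le_re hle ?_
  have h1 : z.re ^ 2 + z.im ^ 2 = 1 := by
    have : ‖z‖ ^ 2 = 1 := by rw [h, one_pow]
    rw [Complex.sq_norm, Complex.normSq_apply] at this; linarith
  have h2 : (z.re - δ) ^ 2 + z.im ^ 2 ≤ (1 - δ) ^ 2 := by
    have : ‖z - δ‖ ^ 2 ≤ (1 - δ) ^ 2 := pow_le_pow_left₀ (norm_nonneg _) hz 2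
    rw [Complex.sq_norm, Complex.normSq_apply, Complex.sub_re, Complex.sub_im,
      Complex.ofReal_re, Complex.ofReal_im, sub_zero] at this
    linarith
  nlinarith

lemma norm_sub_le_of_sub_mul_sub_eq {a b c d z w : ℂ} {R K : ℝ} (hb : ‖b‖ ≤ K) (hc : ‖c‖ ≤ K)
    (ha : ‖a - z‖ + K ≤ R) (hd : ‖d - z‖ + K ≤ R) (hw : (a - w) * (d - w) = b * c) :
    ‖w - z‖ ≤ R := by
  by_contra! h
  have hK : 0 ≤ K := (norm_nonneg b).trans hb
  have ha' : K < ‖a - w‖ := by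
    linarith [norm_sub_le_norm_sub_add_norm_sub w a z, norm_sub_rev w a]
  have hd' : K < ‖d - w‖ := by
    linarith [norm_sub_le_norm_sub_add_norm_sub w d z, norm_sub_rev w d]
  have : ‖a - w‖ * ‖d - w‖ ≤ K * K := by
    rw [← norm_mul, hw, norm_mul]; exact mul_le_mul hb hc (norm_nonneg c) hK
  nlinarith [mul_lt_mul'' ha' hd' hK hK]

lemma exists_tendsto_of_linear_system {a b c d : ℂ} {δ K : ℝ} (hδ : 0 < δ)
    (hb : ‖b‖ ≤ K) (hc : ‖c‖ ≤ K) (ha : ‖a - δ‖ + K ≤ 1 - δ) (hd : ‖d - δ‖ + K ≤ 1 - δ)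
    {p q : ℕ → ℂ} (hp : ∀ n, p (n + 1) = a * p n + b * q n)
    (hq : ∀ n, q (n + 1) = c * p n + d * q n) :
    (∃ P, Tendsto p atTop (nhds P)) ∧ (∃ Q, Tendsto q atTop (nhds Q)) := by
  obtain ⟨s, hs⟩ := IsAlgClosed.exists_pow_nat_eq ((a - d) ^ 2 + 4 * (b * c)) two_pos
  set l := (a + d + s) / 2
  set m := (a + d - s) / 2
  have hsum : l + m = a + d := by ring
  have hprod : l * m = a * d - b * c := by linear_combination -hs / 4
  have hroot : ∀ w, w ^ 2 - (l + m) * w + l * m = 0 → ‖w‖ < 1 ∨ w = 1 := fun w hw =>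
    norm_lt_one_or_eq_one_of_norm_sub_le hδ <| norm_sub_le_of_sub_mul_sub_eq hb hc ha hd <| by
      rw [hsum, hprod] at hw; linear_combination hw
  have hl := hroot l (by ring)
  have hm := hroot m (by ring)
  have hK : 0 ≤ K := (norm_nonneg b).trans hb
  have hnorm : ∀ z : ℂ, ‖z - δ‖ + K ≤ 1 - δ → ‖z‖ ≤ 1 := fun z hz => by
    linarith [norm_le_norm_sub_add z δ, Complex.norm_of_nonneg hδ.le]
  have hdeg : l = 1 → m = 1 → a = 1 ∧ d = 1 ∧ b = 0 ∧ c = 0 := fun hl1 hm1 => by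
    have had : a + d = 2 := by rw [← hsum, hl1, hm1]; norm_num
    have ha1 := eq_one_of_add_eq_two (hnorm a ha) (hnorm d hd) had
    have hd1 := eq_one_of_add_eq_two (hnorm d hd) (hnorm a ha) (by rw [add_comm, had])
    have hK0 : K ≤ 0 := by
      rw [ha1] at ha
      have : (1 - δ : ℝ) ≤ ‖(1 : ℂ) - δ‖ := by
        simpa using Complex.re_le_norm ((1 : ℂ) - δ)
      linarith
    exact ⟨ha1, hd1, norm_le_zero_iff.mp (hb.trans hK0), norm_le_zero_iff.mp (hc.trans hK0)⟩
  constructor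
  · refine exists_tendsto_of_recurrence (fun n => ?_) hl hm fun hl1 hm1 => ?_
    · rw [hsum, hprod]; linear_combination hp (n + 1) + b * hq n - d * hp n
    · obtain ⟨ha1, -, hb0, -⟩ := hdeg hl1 hm1
      rw [hp, ha1, hb0]; ring
  · refine exists_tendsto_of_recurrence (fun n => ?_) hl hm fun hl1 hm1 => ?_
    · rw [hsum, hprod]; linear_combination hq (n + 1) + c * hp n - a * hq n
    · obtain ⟨-, hd1, -, hc0⟩ := hdeg hl1 hm1
      rw [hq, hd1, hc0]; ring

lemma _root_.Matrix.PosSemidef.norm_sq_apply_le {ι : Type*} {M : Matrix ι ι ℂ}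
    (hM : M.PosSemidef) (r s : ι) : ‖M r s‖ ^ 2 ≤ ‖M r r‖ * ‖M s s‖ := by
  have hdet := (hM.submatrix ![r, s]).det_nonneg
  rw [Matrix.det_fin_two] at hdet
  simp only [Matrix.submatrix_apply, Matrix.cons_val_zero, Matrix.cons_val_one] at hdet
  rw [← hM.isHermitian.apply s r, Complex.star_def, Complex.mul_conj',
    ← Complex.norm_of_nonneg' (hM.diag_nonneg (i := r)),
    ← Complex.norm_of_nonneg' (hM.diag_nonneg (i := s))] at hdet
  exact_mod_cast sub_nonneg.mp hdet

variable {k : ℕ} [NeZero k]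

lemma stdAddChar_mul_stdAddChar {a b c d : ZMod k} (h : a + b = c + d) :
    (stdAddChar a * stdAddChar b : ℂ) = stdAddChar c * stdAddChar d := by
  rw [← AddChar.map_add_eq_mul, ← AddChar.map_add_eq_mul, h]

lemma etac_eq_stdAddChar (t : ZMod k) : etac k t = stdAddChar t := by
  rw [etac, stdAddChar_apply, toCircle_apply]

lemma norm_stdAddChar (t : ZMod k) : ‖(stdAddChar t : ℂ)‖ = 1 := by
  rw [stdAddChar_apply]; exact Circle.norm_coe _

lemma sum_stdAddChar_mul_sub_mul (c : ZMod k) (f : ZMod k → ℂ) :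
    ∑ s, (∑ i, (stdAddChar (i * (c - s)) : ℂ)) * f s = k * f c := by
  classical
  simp_rw [AddChar.sum_mulShift _ (isPrimitive_stdAddChar k), ZMod.card, sub_eq_zero,
    Nat.cast_ite, ite_mul, Nat.cast_zero, zero_mul, Finset.sum_ite_eq, Finset.mem_univ, if_true]

lemma sum_stdAddChar_neg_mul_sum (h : ZMod k → ℂ) (i : ZMod k) :
    ∑ x, stdAddChar (-(x * i)) * ∑ m, stdAddChar (x * m) * h m = k * h i := by
  rw [← sum_stdAddChar_mul_sub_mul i h, ← Equiv.sum_comp (Equiv.neg (ZMod k))]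
  simp only [Finset.mul_sum, Finset.sum_mul]
  rw [Finset.sum_comm]
  refine Finset.sum_congr rfl fun m _ => Finset.sum_congr rfl fun x _ => ?_
  rw [Equiv.neg_apply, show x * (i - m) = -(-x * i) + -x * m by ring, AddChar.map_add_eq_mul]
  ring

def fourierA (b : ZMod k → ZMod k → ℂ) (x y : ZMod k) : ℂ :=
  ∑ p : ZMod k × ZMod k, stdAddChar (x * p.1 + y * p.2) * b p.1 p.2

def fourierK (ω : ZMod k → ZMod k → ℂ) (t x : ZMod k) : ℂ :=
  ∑ r, stdAddChar (x * r) * ω r (r + t)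

lemma fourierA_add (f g : ZMod k → ZMod k → ℂ) (x y : ZMod k) :
    fourierA (fun i j => f i j + g i j) x y = fourierA f x y + fourierA g x y := by
  simp only [fourierA, mul_add, Finset.sum_add_distrib]

lemma fourierA_conv (a b : ZMod k → ZMod k → ℂ) (x y : ZMod k) :
    fourierA (fun i j => ∑ m, ∑ n, a m n * b (i - m) (j - n)) x y
      = fourierA a x y * fourierA b x y := by
  rw [fourierA, fourierA, fourierA, Finset.sum_mul_sum]
  simp only [← Fintype.sum_prod_type' (γ := ℂ) (α₁ := ZMod k) (α₂ := ZMod k)]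
  simp only [Finset.mul_sum]
  rw [Finset.sum_comm]
  refine Finset.sum_congr rfl fun q _ => ?_
  rw [← Equiv.sum_comp (Equiv.addRight q)]
  refine Finset.sum_congr rfl fun p _ => ?_
  simp only [Equiv.coe_addRight, Prod.fst_add, Prod.snd_add, add_sub_cancel_right]
  rw [show x * (p.1 + q.1) + y * (p.2 + q.2) = (x * q.1 + y * q.2) + (x * p.1 + y * p.2) by ring,
    AddChar.map_add_eq_mul]
  ring

lemma fourierA_twistedConv (κ ω : ZMod k → ZMod k → ℂ) (x y : ZMod k) :
    fourierA (fun i j => (1 / (k : ℂ)) * ∑ r, ∑ s,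
        stdAddChar (i * (r - s)) * (κ r s * ω (r + j) (s + j))) x y
      = fourierK κ x (-y) * fourierK ω x y := by
  have hk : (k : ℂ) ≠ 0 := NeZero.ne _
  calc _ = (1 / (k : ℂ)) * ∑ j, ∑ r, ∑ s, (∑ i, (stdAddChar (i * (r + x - s)) : ℂ))
          * (stdAddChar (y * j) * (κ r s * ω (r + j) (s + j))) := by
        simp only [fourierA, Fintype.sum_prod_type, Finset.mul_sum, Finset.sum_mul]
        rw [Finset.sum_comm]
        refine Finset.sum_congr rfl fun j _ => ?_
        rw [Finset.sum_comm]
        refine Finset.sum_congr rfl fun r _ => ?_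
        rw [Finset.sum_comm]
        refine Finset.sum_congr rfl fun s _ => ?_
        refine Finset.sum_congr rfl fun i _ => ?_
        linear_combination (1 / (k : ℂ) * (κ r s * ω (r + j) (s + j))) *
          stdAddChar_mul_stdAddChar (a := x * i + y * j) (b := i * (r - s))
            (c := i * (r + x - s)) (d := y * j) (by ring)
    _ = ∑ j, ∑ r, stdAddChar (y * j) * (κ r (r + x) * ω (r + j) (r + x + j)) := by
        simp only [sum_stdAddChar_mul_sub_mul, Finset.mul_sum]
        refine Finset.sum_congr rfl fun j _ => Finset.sum_congr rfl fun r _ => ?_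
        field_simp
    _ = _ := by
        rw [fourierK, fourierK, Finset.sum_mul_sum, Finset.sum_comm]
        refine Finset.sum_congr rfl fun r _ => ?_
        rw [← Equiv.sum_comp (Equiv.addLeft r) (fun u => _ * (_ * ω u (u + x)))]
        refine Finset.sum_congr rfl fun j _ => ?_
        rw [Equiv.coe_addLeft, show r + j + x = r + x + j by ring]
        rw [show y * j = -y * r + y * (r + j) by ring, AddChar.map_add_eq_mul]
        ring

lemma fourierK_convK (a κ b ω : ZMod k → ZMod k → ℂ) (t x : ZMod k) :
    fourierK (convK k a κ b ω) t x
      = fourierA a t (-x) * fourierK ω t x + fourierK κ t x * fourierA b t x := by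
  simp only [fourierK, fourierA, convK, etac_eq_stdAddChar, add_sub_cancel_left, mul_add,
    Finset.sum_add_distrib, Finset.mul_sum, Finset.sum_mul,
    ← Fintype.sum_prod_type' (γ := ℂ) (α₁ := ZMod k) (α₂ := ZMod k)]
  congr 1
  · rw [Finset.sum_comm]
    conv_rhs => rw [Finset.sum_comm]
    refine Finset.sum_congr rfl fun p _ => ?_
    refine Fintype.sum_equiv (Equiv.addRight p.2) _ _ fun r => ?_
    rw [Equiv.coe_addRight, show r + p.2 + t = r + t + p.2 by ring]
    linear_combination (a p.1 p.2 * ω (r + p.2) (r + t + p.2)) *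
      stdAddChar_mul_stdAddChar (a := x * r) (b := p.1 * t) (c := t * p.1 + -x * p.2)
        (d := x * (r + p.2)) (by ring)
  · rw [Finset.sum_comm]
    refine Finset.sum_congr rfl fun p _ => ?_
    refine Fintype.sum_equiv (Equiv.subRight p.2) _ _ fun r => ?_
    rw [Equiv.subRight_apply, show r - p.2 + t = r + t - p.2 by ring]
    linear_combination (b p.1 p.2 * κ (r - p.2) (r + t - p.2)) *
      stdAddChar_mul_stdAddChar (a := x * r) (b := p.1 * t) (c := x * (r - p.2))
        (d := t * p.1 + x * p.2) (by ring)

lemma fourierA_convA (a κ b ω : ZMod k → ZMod k → ℂ) (x y : ZMod k) :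
    fourierA (convA k a κ b ω) x y
      = fourierA a x y * fourierA b x y + fourierK κ x (-y) * fourierK ω x y := by
  unfold convA
  simp only [etac_eq_stdAddChar]
  rw [fourierA_add, fourierA_conv, fourierA_twistedConv]

lemma fourierA_eq_sum_sum (b : ZMod k → ZMod k → ℂ) (x y : ZMod k) :
    fourierA b x y = ∑ m, stdAddChar (x * m) * ∑ n, stdAddChar (y * n) * b m n := by
  simp only [fourierA, Fintype.sum_prod_type, AddChar.map_add_eq_mul, Finset.mul_sum, mul_assoc]

lemma sum_stdAddChar_mul_fourierA (b : ZMod k → ZMod k → ℂ) (i j : ZMod k) :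
    ∑ x, ∑ y, stdAddChar (-(x * i) - y * j) * fourierA b x y = k ^ 2 * b i j := by
  calc _ = ∑ y, stdAddChar (-(y * j)) * ∑ x, stdAddChar (-(x * i)) *
        ∑ m, stdAddChar (x * m) * ∑ n, stdAddChar (y * n) * b m n := by
        simp only [fourierA_eq_sum_sum, Finset.mul_sum]
        rw [Finset.sum_comm]
        refine Finset.sum_congr rfl fun y _ => Finset.sum_congr rfl fun x _ => ?_
        refine Finset.sum_congr rfl fun m _ => Finset.sum_congr rfl fun n _ => ?_
        rw [sub_eq_add_neg, AddChar.map_add_eq_mul]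
        ring
    _ = _ := by
        simp only [sum_stdAddChar_neg_mul_sum, mul_left_comm _ (k : ℂ)]
        rw [← Finset.mul_sum, sum_stdAddChar_neg_mul_sum]
        ring

lemma sum_stdAddChar_mul_fourierK (ω : ZMod k → ZMod k → ℂ) (r s : ZMod k) :
    ∑ x, stdAddChar (-(x * r)) * fourierK ω (s - r) x = k * ω r s := by
  simp only [fourierK, sum_stdAddChar_neg_mul_sum, add_sub_cancel]

lemma exists_tendsto_of_fourierA {b : ℕ → ZMod k → ZMod k → ℂ}
    (h : ∀ x y, ∃ L, Tendsto (fun n => fourierA (b n) x y) atTop (nhds L)) (i j : ZMod k) :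
    ∃ L, Tendsto (fun n => b n i j) atTop (nhds L) := by
  choose P hP using h
  have hinv : ∀ n, b n i j = ((k : ℂ) ^ 2)⁻¹ *
      ∑ x, ∑ y, stdAddChar (-(x * i) - y * j) * fourierA (b n) x y := fun n => by
    rw [sum_stdAddChar_mul_fourierA, inv_mul_cancel_left₀ (pow_ne_zero 2 (NeZero.ne _))]
  exact ⟨_, ((tendsto_finsetSum _ fun x _ => tendsto_finsetSum _ fun y _ =>
    (hP x y).const_mul _).const_mul _).congr fun n => (hinv n).symm⟩

lemma exists_tendsto_of_fourierK {ω : ℕ → ZMod k → ZMod k → ℂ}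
    (h : ∀ t x, ∃ L, Tendsto (fun n => fourierK (ω n) t x) atTop (nhds L)) (r s : ZMod k) :
    ∃ L, Tendsto (fun n => ω n r s) atTop (nhds L) := by
  choose Q hQ using h
  have hinv : ∀ n, ω n r s = (k : ℂ)⁻¹ *
      ∑ x, stdAddChar (-(x * r)) * fourierK (ω n) (s - r) x := fun n => by
    rw [sum_stdAddChar_mul_fourierK, inv_mul_cancel_left₀ (NeZero.ne _)]
  exact ⟨_, ((tendsto_finsetSum _ fun x _ =>
    (hQ (s - r) x).const_mul _).const_mul _).congr fun n => (hinv n).symm⟩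

lemma norm_fourierA_sub_le (b : ZMod k → ZMod k → ℂ) (x y : ZMod k) :
    ‖fourierA b x y - b 0 0‖ ≤ ∑ p : ZMod k × ZMod k, ‖b p.1 p.2‖ - ‖b 0 0‖ := by
  have h0 := Finset.mem_univ (0 : ZMod k × ZMod k)
  have hA : fourierA b x y - b 0 0 = ∑ p ∈ Finset.univ.erase (0 : ZMod k × ZMod k),
      stdAddChar (x * p.1 + y * p.2) * b p.1 p.2 := by
    simp [Finset.sum_erase_eq_sub h0, fourierA]
  have hB : ∑ p : ZMod k × ZMod k, ‖b p.1 p.2‖ - ‖b 0 0‖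
      = ∑ p ∈ Finset.univ.erase (0 : ZMod k × ZMod k), ‖b p.1 p.2‖ := by
    simp [Finset.sum_erase_eq_sub h0]
  rw [hA, hB]
  refine (norm_sum_le _ _).trans_eq (Finset.sum_congr rfl fun p _ => ?_)
  rw [norm_mul, norm_stdAddChar, one_mul]

lemma norm_fourierK_le {κ : ZMod k → ZMod k → ℂ} (hκ : (Matrix.of κ).PosSemidef) (t x : ZMod k) :
    ‖fourierK κ t x‖ ≤ ∑ r, ‖κ r r‖ := by
  calc ‖fourierK κ t x‖ ≤ ∑ r, ‖κ r (r + t)‖ := by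
        refine (norm_sum_le _ _).trans_eq (Finset.sum_congr rfl fun r _ => ?_)
        rw [norm_mul, norm_stdAddChar, one_mul]
    _ ≤ ∑ r, (‖κ r r‖ + ‖κ (r + t) (r + t)‖) / 2 := by
        refine Finset.sum_le_sum fun r _ => ?_
        have := hκ.norm_sq_apply_le r (r + t)
        simp only [Matrix.of_apply] at this
        nlinarith [sq_nonneg (‖κ r r‖ - ‖κ (r + t) (r + t)‖), norm_nonneg (κ r (r + t)),
          norm_nonneg (κ r r), norm_nonneg (κ (r + t) (r + t))]
    _ = ∑ r, ‖κ r r‖ := by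
        rw [← Finset.sum_div, Finset.sum_add_distrib,
          Fintype.sum_equiv (Equiv.addRight t) (fun r => ‖κ (r + t) (r + t)‖) (fun r => ‖κ r r‖)
            fun _ => rfl]
        ring

end Sekine

open Sekine

theorem stmt15_general (k : ℕ) [NeZero k] (α κ : ZMod k → ZMod k → ℂ)
    (hpos : ∀ i j : ZMod k, 0 ≤ α i j)
    (hpsd : (Matrix.of κ).PosSemidef)
    (hnorm : (∑ i : ZMod k, ∑ j : ZMod k, α i j) + ∑ r : ZMod k, κ r r = 1)
    (h00 : 0 < α 0 0) :
    ∃ A B : ZMod k → ZMod k → ℂ,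
      (∀ i j : ZMod k, Filter.Tendsto (fun n => (convIter k α κ n).1 i j)
        Filter.atTop (nhds (A i j))) ∧
      (∀ r s : ZMod k, Filter.Tendsto (fun n => (convIter k α κ n).2 r s)
        Filter.atTop (nhds (B r s))) := by
  have hdiag : ∀ r, 0 ≤ κ r r := fun r => hpsd.diag_nonneg
  have hmass : ∑ p : ZMod k × ZMod k, ‖α p.1 p.2‖ + ∑ r, ‖κ r r‖ = 1 := by
    have : ((∑ p : ZMod k × ZMod k, ‖α p.1 p.2‖ + ∑ r, ‖κ r r‖ : ℝ) : ℂ) = 1 := by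
      push_cast
      simp_rw [Complex.norm_of_nonneg' (hpos _ _), Complex.norm_of_nonneg' (hdiag _),
        Fintype.sum_prod_type']
      exact hnorm
    exact_mod_cast this
  have hfreq : ∀ x y, ‖fourierA α x y - ‖α 0 0‖‖ + ∑ r, ‖κ r r‖ ≤ 1 - ‖α 0 0‖ := fun x y => by
    rw [Complex.norm_of_nonneg' (hpos 0 0)]
    linarith [norm_fourierA_sub_le α x y]
  have hlim : ∀ x y,
      (∃ P, Tendsto (fun n => fourierA (convIter k α κ n).1 x y) atTop (nhds P)) ∧
      (∃ Q, Tendsto (fun n => fourierK (convIter k α κ n).2 x y) atTop (nhds Q)) := fun x y =>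
    exists_tendsto_of_linear_system (norm_pos_iff.mpr h00.ne') (norm_fourierK_le hpsd x (-y))
      (norm_fourierK_le hpsd x y) (hfreq x y) (hfreq x (-y)) (fun n => fourierA_convA _ _ _ _ x y)
      (fun n => (fourierK_convK _ _ _ _ x y).trans (add_comm _ _))
  choose A hA using exists_tendsto_of_fourierA fun x y => (hlim x y).1
  choose B hB using exists_tendsto_of_fourierK fun t x => (hlim t x).2
  exact ⟨A, B, hA, hB⟩

theorem stmt15 (k : ℕ) [NeZero k] (hk : 2 ≤ k) (α κ : ZMod k → ZMod k → ℂ)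
    (hpos : ∀ i j : ZMod k, 0 ≤ α i j)
    (hpsd : (Matrix.of κ).PosSemidef)
    (hnorm : (∑ i : ZMod k, ∑ j : ZMod k, α i j) + ∑ r : ZMod k, κ r r = 1)
    (h00 : 0 < α 0 0) :
    ∃ A B : ZMod k → ZMod k → ℂ,
      (∀ i j : ZMod k, Filter.Tendsto (fun n => (convIter k α κ n).1 i j)
        Filter.atTop (nhds (A i j))) ∧
      (∀ r s : ZMod k, Filter.Tendsto (fun n => (convIter k α κ n).2 r s)
        Filter.atTop (nhds (B r s))) :=
  stmt15_general k α κ hpos hpsd hnorm h00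
end
end
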